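/- Let κ, r, k, m be integers with r ≥ 4, 3 ≤ k ≤ κ−2, and m = (k+1)(r−2)+4. Let G₂ = K₁ + \overline{K}_κ + K_{κ+m−r} + (\overline{K}_m + K_r), and let l = κ+m−1. Then σ_{l+1}(G₂) < n(G₂) + l(l−1); in fact n(G₂) + l(l−1) − σ_{l+1}(G₂) = (κ−k−1)(r−2) − 1 > 0. -/

import Mathlib

open SimpleGraph

/-- A set of vertices is independent if no two of its vertices are adjacent. -/
def SimpleGraph.IsIndepSet' {V : Type*} (G : SimpleGraph V) (s : Set V) : Prop :=
  s.Pairwise fun u v => ¬ G.Adj u v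

/-- The independence number `α(G)`: the maximum size of an independent set. -/
noncomputable def SimpleGraph.indepNum' {V : Type*} (G : SimpleGraph V) [Fintype V] : ℕ :=
  sSup {n | ∃ s : Finset V, G.IsIndepSet' ↑s ∧ s.card = n}

/-- `G` is `k`-connected: `G` has more than `k` vertices and deleting any set of
fewer than `k` vertices leaves a connected graph. -/
def SimpleGraph.IsKConnected {V : Type*} (G : SimpleGraph V) [Fintype V] (k : ℕ) : Prop :=
  k < Fintype.card V ∧ ∀ s : Set V, s.ncard < k → (G.induce sᶜ).Connected

/-- The connectivity `κ(G)`: the largest `k` such that `G` is `k`-connected. -/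
noncomputable def SimpleGraph.connectivity' {V : Type*} (G : SimpleGraph V) [Fintype V] : ℕ :=
  sSup {k | G.IsKConnected k}

/-- `σ_k(G)`: the minimum degree sum over independent sets of size `k`
(`⊤` if there is no such set). -/
noncomputable def SimpleGraph.sigmaDeg {V : Type*} (G : SimpleGraph V) [Fintype V]
    (k : ℕ) : ℕ∞ := by
  classical
  exact ⨅ s ∈ {s : Finset V | G.IsIndepSet' ↑s ∧ s.card = k}, (∑ x ∈ s, G.degree x : ℕ∞)

/-- A "blowup" graph: vertices are grouped in parts indexed by `ι`, where part `i` has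
`sizes i` vertices, part `i` induces a complete graph if `compl i` holds (an edgeless graph
otherwise), and two parts `i`, `j` are completely joined iff `rel i j ∨ rel j i`. -/
def blowup {ι : Type} (sizes : ι → ℕ) (compl : ι → Prop) (rel : ι → ι → Prop) :
    SimpleGraph (Σ i, Fin (sizes i)) where
  Adj x y := (x.1 = y.1 ∧ compl x.1 ∧ x ≠ y) ∨ (x.1 ≠ y.1 ∧ (rel x.1 y.1 ∨ rel y.1 x.1))
  symm := by
    constructor
    rintro x y (⟨h1, h2, h3⟩ | ⟨h1, h2⟩)
    · exact Or.inl ⟨h1.symm, h1 ▸ h2, h3.symm⟩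
    · exact Or.inr ⟨h1.symm, h2.symm⟩
  loopless := by constructor; rintro x (⟨_, _, h⟩ | ⟨h, _⟩) <;> exact h rfl

/-- The graph `G₁ = K_{n-2m} + K̄_κ + K̄_m + K̄_{m-κ}` (sequential join). -/
def GraphG1 (n m κ : ℕ) : SimpleGraph (Σ i : Fin 4, Fin (![n - 2 * m, κ, m, m - κ] i)) :=
  blowup ![n - 2 * m, κ, m, m - κ] (fun i => i = 0) (fun i j => (i : ℕ) + 1 = (j : ℕ))

/-- The graph `G₂ = K₁ + K̄_κ + K_{κ+m-r} + (K̄_m + K_r)`: five parts where parts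
`0, 2, 4` are complete, parts `1, 3` are edgeless, and the joined pairs of parts are
`(0,1), (1,2), (2,3), (2,4), (3,4)`. -/
def GraphG2 (κ m r : ℕ) : SimpleGraph (Σ i : Fin 5, Fin (![1, κ, κ + m - r, m, r] i)) :=
  blowup ![1, κ, κ + m - r, m, r] (fun i => i = 0 ∨ i = 2 ∨ i = 4)
    (fun i j => (i = 0 ∧ j = 1) ∨ (i = 1 ∧ j = 2) ∨ (i = 2 ∧ j = 3) ∨
      (i = 2 ∧ j = 4) ∨ (i = 3 ∧ j = 4))


lemma card_filter_sigma' {n : ℕ} {f : Fin n → ℕ} (p : (Σ i, Fin (f i)) → Prop)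
    [DecidablePred p] :
    (Finset.univ.filter p).card
      = ∑ i, (Finset.univ.filter fun b : Fin (f i) => p ⟨i, b⟩).card := by
  have h : Finset.univ.filter p
      = Finset.univ.sigma fun i => Finset.univ.filter fun b : Fin (f i) => p ⟨i, b⟩ := by
    ext ⟨i, b⟩; simp
  rw [h, Finset.card_sigma]

lemma adjG2' (κ m r : ℕ) (x y : Σ i : Fin 5, Fin (![1, κ, κ + m - r, m, r] i)) :
    (GraphG2 κ m r).Adj x y ↔
      (x.1 = y.1 ∧ (x.1 = 0 ∨ x.1 = 2 ∨ x.1 = 4) ∧ x ≠ y) ∨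
      (x.1 ≠ y.1 ∧
        (((x.1 = 0 ∧ y.1 = 1) ∨ (x.1 = 1 ∧ y.1 = 2) ∨ (x.1 = 2 ∧ y.1 = 3) ∨
          (x.1 = 2 ∧ y.1 = 4) ∨ (x.1 = 3 ∧ y.1 = 4)) ∨
         ((y.1 = 0 ∧ x.1 = 1) ∨ (y.1 = 1 ∧ x.1 = 2) ∨ (y.1 = 2 ∧ x.1 = 3) ∨
          (y.1 = 2 ∧ x.1 = 4) ∨ (y.1 = 3 ∧ x.1 = 4)))) := Iff.rfl

lemma fin5_cases (j : Fin 5) : j = 0 ∨ j = 1 ∨ j = 2 ∨ j = 3 ∨ j = 4 := by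
  revert j; decide

/-- For `G₂ = K₁ + K̄_κ + K_{κ+m-r} + (K̄_m + K_r)` (with `r ≥ 4`, `3 ≤ k ≤ κ-2`,
`m = (k+1)(r-2)+4`) and `l = κ+m-1`, one has `σ_{l+1}(G₂) < n(G₂) + l(l-1)`; in fact
`n(G₂) + l(l-1) - σ_{l+1}(G₂) = (κ-k-1)(r-2) - 1 > 0`. -/
theorem stmt_16 (κ r k m l : ℕ) (hr : 4 ≤ r) (hk3 : 3 ≤ k) (hkκ : k ≤ κ - 2)
    (hm : m = (k + 1) * (r - 2) + 4) (hl : l = κ + m - 1) :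
    (GraphG2 κ m r).sigmaDeg (l + 1) <
      ((Fintype.card (Σ i : Fin 5, Fin (![1, κ, κ + m - r, m, r] i))) + l * (l - 1) : ℕ) ∧
    (GraphG2 κ m r).sigmaDeg (l + 1) + ((κ - k - 1) * (r - 2) - 1 : ℕ) =
      ((Fintype.card (Σ i : Fin 5, Fin (![1, κ, κ + m - r, m, r] i))) + l * (l - 1) : ℕ) ∧
    0 < (κ - k - 1) * (r - 2) - 1 := by
    classical
  -- arithmetic setup
  obtain ⟨a, ha⟩ : ∃ a, κ = k + 2 + a := ⟨κ - (k + 2), by omega⟩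
  obtain ⟨b, hb⟩ : ∃ b, r = b + 4 := ⟨r - 4, by omega⟩
  have hm' : m = k * b + 2 * k + b + 6 := by
    have h2 : r - 2 = b + 2 := by omega
    rw [hm, h2]; ring
  obtain ⟨p, hp⟩ : ∃ p, p = k * b := ⟨_, rfl⟩
  rw [← hp] at hm'
  have hq : κ + m - r = p + a + 3 * k + 4 := by omega
  have hl' : l = p + a + b + 3 * k + 7 := by omega
  have hl1 : l - 1 = p + a + b + 3 * k + 6 := by omega
  have hd : (κ - k - 1) * (r - 2) - 1 = a * b + 2 * a + b + 1 := by
    have h1 : κ - k - 1 = a + 1 := by omega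
    have h2 : r - 2 = b + 2 := by omega
    have h3 : (a + 1) * (b + 2) = a * b + 2 * a + b + 2 := by ring
    rw [h1, h2]; omega
  set S₀ : Finset (Σ i : Fin 5, Fin (![1, κ, κ + m - r, m, r] i)) :=
    Finset.univ.filter fun x => x.1 = 1 ∨ x.1 = 3 with hS₀
  -- cardinality computations
  have c0 : (Finset.univ.filter
      fun x : Σ i : Fin 5, Fin (![1, κ, κ + m - r, m, r] i) => x.1 = 0).card = 1 := by
    rw [card_filter_sigma', Fin.sum_univ_five]
    simp (config := { decide := true, dsimp := false })
  have c01 : (Finset.univ.filter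
      fun x : Σ i : Fin 5, Fin (![1, κ, κ + m - r, m, r] i) => x.1 = 0 ∨ x.1 = 1).card
      = 1 + κ := by
    rw [card_filter_sigma', Fin.sum_univ_five]
    simp (config := { decide := true, dsimp := false })
  have c3 : (Finset.univ.filter
      fun x : Σ i : Fin 5, Fin (![1, κ, κ + m - r, m, r] i) => x.1 = 3).card = m := by
    rw [card_filter_sigma', Fin.sum_univ_five]
    simp (config := { decide := true, dsimp := false })
  have cS₀ : S₀.card = κ + m := by
    rw [hS₀, card_filter_sigma', Fin.sum_univ_five]
    simp (config := { decide := true, dsimp := false })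
  have hl2 : l + 1 = κ + m := by omega
  -- S₀ is independent
  have indepS₀ : (GraphG2 κ m r).IsIndepSet' ↑S₀ := by
    rintro ⟨i, c⟩ hu ⟨j, d⟩ hv hne hadj
    simp only [hS₀, Finset.coe_filter, Set.mem_setOf_eq, Finset.mem_univ, true_and] at hu hv
    rw [adjG2'] at hadj
    rcases hu with rfl | rfl <;> rcases hv with rfl | rfl <;>
      simp (config := { decide := true }) [Sigma.ext_iff] at hadj
  -- degree computations
  have d1 : ∀ x : Σ i : Fin 5, Fin (![1, κ, κ + m - r, m, r] i),
      x.1 = 1 → (GraphG2 κ m r).degree x = 1 + (κ + m - r) := by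
    rintro ⟨i, c⟩ hi
    subst hi
    rw [← SimpleGraph.card_neighborFinset_eq_degree, SimpleGraph.neighborFinset_eq_filter,
      card_filter_sigma', Fin.sum_univ_five]
    simp only [adjG2']
    simp (config := { decide := true, dsimp := false }) [Sigma.ext_iff]
  have d3 : ∀ x : Σ i : Fin 5, Fin (![1, κ, κ + m - r, m, r] i),
      x.1 = 3 → (GraphG2 κ m r).degree x = (κ + m - r) + r := by
    rintro ⟨i, c⟩ hi
    subst hi
    rw [← SimpleGraph.card_neighborFinset_eq_degree, SimpleGraph.neighborFinset_eq_filter,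
      card_filter_sigma', Fin.sum_univ_five]
    simp only [adjG2']
    simp (config := { decide := true, dsimp := false }) [Sigma.ext_iff]
  -- degree sum over S₀
  have hsum : (∑ x ∈ S₀, (GraphG2 κ m r).degree x)
      = κ * (1 + (κ + m - r)) + m * ((κ + m - r) + r) := by
    have hsplit : S₀ = (Finset.univ.filter
          fun x : Σ i : Fin 5, Fin (![1, κ, κ + m - r, m, r] i) => x.1 = 1)
        ∪ (Finset.univ.filter
          fun x : Σ i : Fin 5, Fin (![1, κ, κ + m - r, m, r] i) => x.1 = 3) := by
      rw [hS₀, Finset.filter_or]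
    have hdisj : Disjoint (Finset.univ.filter
          fun x : Σ i : Fin 5, Fin (![1, κ, κ + m - r, m, r] i) => x.1 = 1)
        (Finset.univ.filter
          fun x : Σ i : Fin 5, Fin (![1, κ, κ + m - r, m, r] i) => x.1 = 3) := by
      simp only [Finset.disjoint_left, Finset.mem_filter]
      rintro x ⟨-, h1⟩ ⟨-, h3⟩
      rw [h1] at h3; exact absurd h3 (by decide)
    have c1 : (Finset.univ.filter
        fun x : Σ i : Fin 5, Fin (![1, κ, κ + m - r, m, r] i) => x.1 = 1).card = κ := by
      rw [card_filter_sigma', Fin.sum_univ_five]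
      simp (config := { decide := true, dsimp := false })
    rw [hsplit, Finset.sum_union hdisj,
      Finset.sum_const_nat (m := 1 + (κ + m - r)) (fun x hx => d1 x (Finset.mem_filter.1 hx).2),
      Finset.sum_const_nat (m := (κ + m - r) + r) (fun x hx => d3 x (Finset.mem_filter.1 hx).2),
      c1, c3]
  -- uniqueness of the independent set of size l+1
  have huniq : ∀ s : Finset (Σ i : Fin 5, Fin (![1, κ, κ + m - r, m, r] i)),
      (GraphG2 κ m r).IsIndepSet' ↑s → s.card = l + 1 → s = S₀ := by
    intro s hind hcard
    rw [hl2] at hcard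
    have h2 : ∀ x ∈ s, x.1 ≠ (2 : Fin 5) := by
      rintro ⟨i, c⟩ hx hi
      subst hi
      have hsub : s ⊆ insert ⟨2, c⟩ (Finset.univ.filter
          fun y : Σ i : Fin 5, Fin (![1, κ, κ + m - r, m, r] i) => y.1 = 0) := by
        intro y hy
        rcases eq_or_ne y ⟨2, c⟩ with h' | h'
        · exact h' ▸ Finset.mem_insert_self _ _
        · have hna : ¬ (GraphG2 κ m r).Adj ⟨2, c⟩ y :=
            hind (Finset.mem_coe.2 hx) (Finset.mem_coe.2 hy) (Ne.symm h')
          obtain ⟨j, d⟩ := y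
          rcases fin5_cases j with rfl | rfl | rfl | rfl | rfl
          · exact Finset.mem_insert_of_mem (Finset.mem_filter.2 ⟨Finset.mem_univ _, rfl⟩)
          · exact absurd ((adjG2' κ m r ⟨2, c⟩ ⟨1, d⟩).2 (Or.inr (by simp (config := { decide := true })))) hna
          · exact absurd ((adjG2' κ m r ⟨2, c⟩ ⟨2, d⟩).2
              (Or.inl ⟨rfl, by simp (config := { decide := true }), Ne.symm h'⟩)) hna
          · exact absurd ((adjG2' κ m r ⟨2, c⟩ ⟨3, d⟩).2 (Or.inr (by simp (config := { decide := true })))) hna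
          · exact absurd ((adjG2' κ m r ⟨2, c⟩ ⟨4, d⟩).2 (Or.inr (by simp (config := { decide := true })))) hna
      have hc1 := Finset.card_le_card hsub
      have hc2 := Finset.card_insert_le (⟨2, c⟩ : Σ i : Fin 5, Fin (![1, κ, κ + m - r, m, r] i))
        (Finset.univ.filter fun y : Σ i : Fin 5, Fin (![1, κ, κ + m - r, m, r] i) => y.1 = 0)
      omega
    have h4 : ∀ x ∈ s, x.1 ≠ (4 : Fin 5) := by
      rintro ⟨i, c⟩ hx hi
      subst hi
      have hsub : s ⊆ insert ⟨4, c⟩ (Finset.univ.filter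
          fun y : Σ i : Fin 5, Fin (![1, κ, κ + m - r, m, r] i) => y.1 = 0 ∨ y.1 = 1) := by
        intro y hy
        rcases eq_or_ne y ⟨4, c⟩ with h' | h'
        · exact h' ▸ Finset.mem_insert_self _ _
        · have hna : ¬ (GraphG2 κ m r).Adj ⟨4, c⟩ y :=
            hind (Finset.mem_coe.2 hx) (Finset.mem_coe.2 hy) (Ne.symm h')
          obtain ⟨j, d⟩ := y
          rcases fin5_cases j with rfl | rfl | rfl | rfl | rfl
          · exact Finset.mem_insert_of_mem
              (Finset.mem_filter.2 ⟨Finset.mem_univ _, Or.inl rfl⟩)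
          · exact Finset.mem_insert_of_mem
              (Finset.mem_filter.2 ⟨Finset.mem_univ _, Or.inr rfl⟩)
          · exact (h2 ⟨2, d⟩ hy rfl).elim
          · exact absurd ((adjG2' κ m r ⟨4, c⟩ ⟨3, d⟩).2 (Or.inr (by simp (config := { decide := true })))) hna
          · exact absurd ((adjG2' κ m r ⟨4, c⟩ ⟨4, d⟩).2
              (Or.inl ⟨rfl, by simp (config := { decide := true }), Ne.symm h'⟩)) hna
      have hc1 := Finset.card_le_card hsub
      have hc2 := Finset.card_insert_le (⟨4, c⟩ : Σ i : Fin 5, Fin (![1, κ, κ + m - r, m, r] i))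
        (Finset.univ.filter
          fun y : Σ i : Fin 5, Fin (![1, κ, κ + m - r, m, r] i) => y.1 = 0 ∨ y.1 = 1)
      omega
    have h0 : ∀ x ∈ s, x.1 ≠ (0 : Fin 5) := by
      rintro ⟨i, c⟩ hx hi
      subst hi
      have hsub : s ⊆ insert ⟨0, c⟩ (Finset.univ.filter
          fun y : Σ i : Fin 5, Fin (![1, κ, κ + m - r, m, r] i) => y.1 = 3) := by
        intro y hy
        rcases eq_or_ne y ⟨0, c⟩ with h' | h'
        · exact h' ▸ Finset.mem_insert_self _ _
        · have hna : ¬ (GraphG2 κ m r).Adj ⟨0, c⟩ y :=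
            hind (Finset.mem_coe.2 hx) (Finset.mem_coe.2 hy) (Ne.symm h')
          obtain ⟨j, d⟩ := y
          rcases fin5_cases j with rfl | rfl | rfl | rfl | rfl
          · refine absurd ?_ h'
            have hd1 : (d : ℕ) < 1 := d.isLt
            have hc1 : (c : ℕ) < 1 := c.isLt
            have : d = c := Fin.ext (by omega)
            rw [this]
          · exact absurd ((adjG2' κ m r ⟨0, c⟩ ⟨1, d⟩).2 (Or.inr (by simp (config := { decide := true })))) hna
          · exact (h2 ⟨2, d⟩ hy rfl).elim
          · exact Finset.mem_insert_of_mem (Finset.mem_filter.2 ⟨Finset.mem_univ _, rfl⟩)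
          · exact (h4 ⟨4, d⟩ hy rfl).elim
      have hc1 := Finset.card_le_card hsub
      have hc2 := Finset.card_insert_le (⟨0, c⟩ : Σ i : Fin 5, Fin (![1, κ, κ + m - r, m, r] i))
        (Finset.univ.filter fun y : Σ i : Fin 5, Fin (![1, κ, κ + m - r, m, r] i) => y.1 = 3)
      omega
    have hsub : s ⊆ S₀ := by
      intro x hx
      rw [hS₀, Finset.mem_filter]
      refine ⟨Finset.mem_univ _, ?_⟩
      rcases fin5_cases x.1 with h | h | h | h | h
      · exact absurd h (h0 x hx)
      · exact Or.inl h
      · exact absurd h (h2 x hx)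
      · exact Or.inr h
      · exact absurd h (h4 x hx)
    exact Finset.eq_of_subset_of_card_le hsub (by omega)
  -- value of sigmaDeg
  have key : (GraphG2 κ m r).sigmaDeg (l + 1)
      = ((κ * (1 + (κ + m - r)) + m * ((κ + m - r) + r) : ℕ) : ℕ∞) := by
    unfold SimpleGraph.sigmaDeg
    apply le_antisymm
    · refine (iInf₂_le S₀ ⟨indepS₀, by omega⟩).trans_eq ?_
      rw [← Nat.cast_sum, hsum]
    · refine le_iInf₂ fun s hs => ?_
      obtain ⟨hi, hc⟩ := hs
      rw [huniq s hi hc, ← Nat.cast_sum, hsum]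
  have hN : Fintype.card (Σ i : Fin 5, Fin (![1, κ, κ + m - r, m, r] i))
      = 1 + κ + (κ + m - r) + m + r := by
    simp [Fintype.card_sigma, Fin.sum_univ_five]
  -- final arithmetic
  have hfin : κ * (1 + (κ + m - r)) + m * ((κ + m - r) + r) + ((κ - k - 1) * (r - 2) - 1)
      = Fintype.card (Σ i : Fin 5, Fin (![1, κ, κ + m - r, m, r] i)) + l * (l - 1) := by
    rw [hd, hN, hq, hl1, hl', ha, hb, hm']
    subst hp
    ring
  have hpos : 0 < (κ - k - 1) * (r - 2) - 1 := by
    rw [hd]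
    exact Nat.succ_pos _
  refine ⟨?_, ?_, hpos⟩
  · rw [key]
    exact_mod_cast Nat.lt_of_lt_of_eq (Nat.lt_add_of_pos_right hpos) hfin
  · rw [key, ← Nat.cast_add, hfin]
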